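/- arXiv:2311.11635 — 2 statements merged into one kernel-verified Lean document; each statement's English description precedes it below -/
import Mathlib

section
/- Let T > 0 and let h ∈ H¹₀([0,T],ℝ). Suppose φ: [0,T] → ℂ is continuous with φ(0) = 0, φ(t) ∈ ℂ \ [0,∞) for all t ∈ (0,T], and φ(t) = −t + 2∫₀^t √(φ(s)) h'(s) ds for all t ∈ [0,T]. Then liminf_{t→0+} Im(√(φ(t)))/√t > 0. -/
open MeasureTheory Set Filter

/-- The branch of the complex square root mapping `ℂ \ [0,∞)` into the open upper
half-plane; on `[0,∞)` it is the usual nonnegative real square root. -/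
noncomputable def upSqrt (z : ℂ) : ℂ :=
  if z.im = 0 ∧ 0 ≤ z.re then (Real.sqrt z.re : ℂ)
  else Complex.I * (-z) ^ ((1 : ℂ) / 2)

/-- `z ∈ ℂ \ [0,∞)`. -/
def offPosReal (z : ℂ) : Prop := ¬(z.im = 0 ∧ 0 ≤ z.re)

/-- The Cameron–Martin space `H¹₀([0,T],ℝ)`: absolutely continuous `h` with `h 0 = 0`
and derivative `dFun ∈ L²([0,T],ℝ)`, recorded via `h t = ∫₀ᵗ h'`. -/
structure CM (T : ℝ) where
  toFun : ℝ → ℝ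
  dFun : ℝ → ℝ
  measurable_dFun : Measurable dFun
  memL2 : MeasureTheory.MemLp dFun 2 (MeasureTheory.volume.restrict (Set.Ioc 0 T))
  eq_int : ∀ t ∈ Set.Icc 0 T, toFun t = ∫ s in Set.Ioc 0 t, dFun s

/-- `φ` is the solution `φ^h`: continuous on `[0,T]`, `φ 0 = 0`, valued in
`ℂ \ [0,∞)` on `(0,T]`, and `φ t = -t + 2∫₀ᵗ √(φ s) h'(s) ds`. -/
def IsPhiH (T : ℝ) (h : CM T) (φ : ℝ → ℂ) : Prop :=
  ContinuousOn φ (Set.Icc 0 T) ∧ φ 0 = 0 ∧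
  (∀ t ∈ Set.Ioc 0 T, offPosReal (φ t)) ∧
  ∀ t ∈ Set.Icc 0 T, φ t = -(t : ℂ) + 2 * ∫ s in Set.Ioc 0 t, upSqrt (φ s) * ((h.dFun s : ℝ) : ℂ)

/-- `d` is an (integrable) a.e. derivative of `φ` on `[0,T]`, i.e. `Re φ`, `Im φ` are
absolutely continuous with `φ t = ∫₀ᵗ d`. -/
def IsDensityOn (T : ℝ) (φ : ℝ → ℂ) (d : ℝ → ℂ) : Prop :=
  MeasureTheory.IntegrableOn d (Set.Ioc 0 T) ∧
  ∀ t ∈ Set.Icc 0 T, φ t = ∫ s in Set.Ioc 0 t, d s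

/-- The rate function `I(φ) = ∫₀ᵀ (φ'(t)+1)²/(8 φ(t)) dt` for `φ ∈ D([0,T],ℂ)`
(conditions (H1),(H2),(H3)), and `+∞` otherwise.  For any admissible density `d = φ'`,
the realness condition (H3) gives `(φ'+1)²/(8φ) = (Re((φ'+1)/(2√φ)))²/2`. -/
noncomputable def rateI (T : ℝ) (φ : ℝ → ℂ) : ENNReal :=
  ⨅ (d : ℝ → ℂ) (_ : IsDensityOn T φ d ∧
      (∀ t ∈ Set.Ioc 0 T, offPosReal (φ t)) ∧
      (∀ᵐ t ∂(MeasureTheory.volume.restrict (Set.Ioc 0 T)),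
        ((d t + 1) / (2 * upSqrt (φ t))).im = 0) ∧
      MeasureTheory.MemLp (fun t => ((d t + 1) / (2 * upSqrt (φ t))).re) 2
        (MeasureTheory.volume.restrict (Set.Ioc 0 T))),
    ∫⁻ t in Set.Ioc 0 T, ENNReal.ofReal ((((d t + 1) / (2 * upSqrt (φ t))).re) ^ 2 / 2)

/-- Riemann–Stieltjes integral `∫₀ᵀ f da` in its integration-by-parts form
`f(T)a(T) - ∫₀ᵀ a(r) f'(r) dr` (for `a 0 = 0`). -/
noncomputable def RSint (T : ℝ) (f a : ℝ → ℝ) : ℝ :=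
  f T * a T - ∫ r in Set.Ioc 0 T, a r * deriv f r

/-- The functional `J_{f,g}(ξ)`. -/
noncomputable def Jfun (T : ℝ) (f g : ℝ → ℝ) (ξ : ℝ → ℂ) : ℝ :=
  (1 / 2) * (RSint T f (fun r => (ξ r).re + r) + RSint T g (fun r => (ξ r).im)) -
    (1 / 2) * ∫ r in Set.Ioc 0 T,
      (f r ^ 2 * (‖ξ r‖ + (ξ r).re) / 2 +
        g r ^ 2 * (‖ξ r‖ - (ξ r).re) / 2 + f r * g r * (ξ r).im)

/-! Write `m` for the maximum of `‖φ‖` on `[0, t]`. In the equation,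
`‖√(φ s) h'(s)‖ ≤ √m |h'(s)|`, and AM–GM at the scale `m ~ t` gives
`‖φ r + r‖ ≤ m/4 + 4t ∫₀ᵗ h'²` for `r ≤ t`. Since `∫₀ᵗ h'² → 0`, evaluating this at the maximum
point first yields `m = O(t)` and then `‖φ t + t‖ ≤ t/2` for small `t`. Hence `-Re φ t ≥ t/2`,
and as `√(φ t)` squares to `φ t` and lies in the upper half-plane,
`Im √(φ t) ≥ √(-Re φ t) ≥ √t / 2`. -/

open Topology

lemma Real.sqrt_mul_abs_le {m t : ℝ} (x : ℝ) (hm : 0 ≤ m) (ht : 0 < t) :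
    √m * |x| ≤ m / (8 * t) + 2 * t * x ^ 2 := by
  have hsq := sq_nonneg (√m - 4 * t * |x|)
  rw [sub_sq, mul_pow, Real.sq_sqrt hm, mul_pow, sq_abs] at hsq
  have hdiv : m / (8 * t) * (8 * t) = m := div_mul_cancel₀ _ (by positivity)
  nlinarith

lemma upSqrt_sq (z : ℂ) : upSqrt z ^ 2 = z := by
  unfold upSqrt
  split_ifs with hz
  · rw [← Complex.ofReal_pow, Real.sq_sqrt hz.2]
    exact Complex.ext (by simp) (by simp [hz.1])
  · rw [mul_pow, Complex.I_sq, one_div, show ((2 : ℂ))⁻¹ = ((2 : ℕ) : ℂ)⁻¹ by norm_num,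
      Complex.cpow_nat_inv_pow _ two_ne_zero]
    ring

lemma im_upSqrt_nonneg (z : ℂ) : 0 ≤ (upSqrt z).im := by
  unfold upSqrt
  split_ifs
  · simp
  · simp only [Complex.mul_im, Complex.I_re, Complex.I_im, one_div, Complex.cpow_inv_two_re,
      zero_mul, one_mul, zero_add]
    exact Real.sqrt_nonneg _

lemma norm_upSqrt (z : ℂ) : ‖upSqrt z‖ = √‖z‖ := by
  rw [← Real.sqrt_sq (norm_nonneg (upSqrt z)), ← norm_pow, upSqrt_sq]

lemma sqrt_neg_re_le_im_upSqrt (z : ℂ) : √(-z.re) ≤ (upSqrt z).im := by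
  have hre : (upSqrt z).re ^ 2 - (upSqrt z).im ^ 2 = z.re := by
    simpa [sq, Complex.mul_re] using congrArg Complex.re (upSqrt_sq z)
  calc √(-z.re) ≤ √((upSqrt z).im ^ 2) := Real.sqrt_le_sqrt (by nlinarith)
    _ = (upSqrt z).im := Real.sqrt_sq (im_upSqrt_nonneg z)

namespace CM

variable {T : ℝ} (h : CM T)

lemma integrableOn_sq {t : ℝ} (ht : t ≤ T) : IntegrableOn (fun s ↦ h.dFun s ^ 2) (Ioc 0 t) :=
  IntegrableOn.mono_set h.memL2.integrable_sq (Ioc_subset_Ioc_right ht)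

lemma tendsto_setIntegral_sq (hT : 0 < T) :
    Tendsto (fun t ↦ ∫ s in Ioc 0 t, h.dFun s ^ 2) (𝓝[>] 0) (𝓝 0) := by
  have hν : Tendsto (fun t ↦ volume.restrict (Ioc 0 T) (Ioc 0 t)) (𝓝[>] 0) (𝓝 0) := by
    have hvol : Tendsto (fun t : ℝ ↦ ENNReal.ofReal t) (𝓝[>] 0) (𝓝 0) := by
      simpa using (ENNReal.continuous_ofReal.tendsto 0).mono_left nhdsWithin_le_nhds
    refine tendsto_of_tendsto_of_tendsto_of_le_of_le tendsto_const_nhds hvol (fun _ ↦ zero_le)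
      fun t ↦ ?_
    simpa [Real.volume_Ioc] using Measure.restrict_apply_le (μ := volume) (Ioc 0 T) (Ioc 0 t)
  refine (h.memL2.integrable_sq.tendsto_setIntegral_nhds_zero hν).congr' ?_
  filter_upwards [Ioc_mem_nhdsGT hT] with t ht
  rw [Measure.restrict_restrict measurableSet_Ioc, inter_eq_left.2 (Ioc_subset_Ioc_right ht.2)]

end CM

namespace IsPhiH

variable {T : ℝ} {h : CM T} {φ : ℝ → ℂ}

lemma norm_add_le_of_norm_le (hφ : IsPhiH T h φ) {t m : ℝ} (ht : t ∈ Ioc 0 T)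
    (hm : ∀ s ∈ Ioc 0 t, ‖φ s‖ ≤ m) :
    ∀ r ∈ Icc 0 t, ‖φ r + r‖ ≤ m / 4 + 4 * t * ∫ s in Ioc 0 t, h.dFun s ^ 2 := by
  intro r hr
  have hint := h.integrableOn_sq ht.2
  set g : ℝ → ℝ := fun s ↦ m / (8 * t) + 2 * t * h.dFun s ^ 2
  have hconst : IntegrableOn (fun _ ↦ m / (8 * t)) (Ioc 0 t) :=
    integrableOn_const measure_Ioc_lt_top.ne
  have hg : IntegrableOn g (Ioc 0 t) := hconst.add (hint.const_mul _)
  have hm_nonneg : 0 ≤ m := (norm_nonneg _).trans (hm t (right_mem_Ioc.2 ht.1))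
  have hbound : ∀ s ∈ Ioc 0 r, ‖upSqrt (φ s) * (h.dFun s : ℂ)‖ ≤ g s := by
    intro s hs
    have hsm : √‖φ s‖ ≤ √m := Real.sqrt_le_sqrt (hm s ⟨hs.1, hs.2.trans hr.2⟩)
    rw [norm_mul, norm_upSqrt, Complex.norm_real, Real.norm_eq_abs]
    exact (mul_le_mul_of_nonneg_right hsm (abs_nonneg _)).trans
      (Real.sqrt_mul_abs_le _ hm_nonneg ht.1)
  have hg_int : ∫ s in Ioc 0 t, g s = m / 8 + 2 * t * ∫ s in Ioc 0 t, h.dFun s ^ 2 := by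
    rw [integral_add hconst (hint.const_mul _), setIntegral_const, integral_const_mul,
      Real.volume_real_Ioc_of_le ht.1.le, smul_eq_mul]
    have ht0 : t ≠ 0 := ht.1.ne'
    field_simp
    ring
  have hφr : φ r + r = 2 * ∫ s in Ioc 0 r, upSqrt (φ s) * (h.dFun s : ℂ) := by
    rw [hφ.2.2.2 r ⟨hr.1, hr.2.trans ht.2⟩]
    ring
  have hg_nonneg : ∀ s, 0 ≤ g s := fun s ↦ by have := ht.1; positivity
  calc ‖φ r + r‖ = 2 * ‖∫ s in Ioc 0 r, upSqrt (φ s) * (h.dFun s : ℂ)‖ := by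
        rw [hφr, norm_mul, Complex.norm_two]
    _ ≤ 2 * ∫ s in Ioc 0 r, g s := by
        gcongr
        exact norm_integral_le_of_norm_le (hg.mono_set (Ioc_subset_Ioc_right hr.2))
          (ae_restrict_of_forall_mem measurableSet_Ioc hbound)
    _ ≤ 2 * ∫ s in Ioc 0 t, g s := mul_le_mul_of_nonneg_left
        (setIntegral_mono_set hg (.of_forall hg_nonneg) (.of_forall (Ioc_subset_Ioc_right hr.2)))
        zero_le_two
    _ = m / 4 + 4 * t * ∫ s in Ioc 0 t, h.dFun s ^ 2 := by
        rw [hg_int]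
        ring

lemma norm_add_le (hφ : IsPhiH T h φ) {t : ℝ} (ht : t ∈ Ioc 0 T)
    (hE : ∫ s in Ioc 0 t, h.dFun s ^ 2 ≤ 1 / 64) : ‖φ t + t‖ ≤ t / 2 := by
  obtain ⟨s₀, hs₀, hmax⟩ := isCompact_Icc.exists_isMaxOn (nonempty_Icc.2 ht.1.le)
    (hφ.1.mono (Icc_subset_Icc_right ht.2)).norm
  have hbound := hφ.norm_add_le_of_norm_le ht fun s hs ↦ hmax (Ioc_subset_Icc_self hs)
  have hm : ‖φ s₀‖ ≤ 17 * t / 12 := by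
    have hs₀_bound := hbound s₀ hs₀
    have htri : ‖φ s₀‖ ≤ ‖φ s₀ + s₀‖ + s₀ := by
      calc ‖φ s₀‖ = ‖(φ s₀ + s₀) - s₀‖ := by rw [add_sub_cancel_right]
        _ ≤ ‖φ s₀ + s₀‖ + ‖(s₀ : ℂ)‖ := norm_sub_le _ _
        _ = ‖φ s₀ + s₀‖ + s₀ := by rw [Complex.norm_of_nonneg hs₀.1]
    nlinarith [hs₀.2, ht.1]
  nlinarith [hbound t (right_mem_Icc.2 ht.1.le), ht.1]

end IsPhiH

/-- For a solution `φ = φ^h`, one has `liminf_{t→0+} Im(√(φ t))/√t > 0`,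
i.e. there is `c > 0` with `Im(√(φ t))/√t ≥ c` for all `t > 0` small enough. -/
theorem stmt1 (T : ℝ) (hT : 0 < T) (h : CM T) (φ : ℝ → ℂ)
    (hφ : IsPhiH T h φ) :
    ∃ c > (0 : ℝ), ∀ᶠ t in nhdsWithin 0 (Set.Ioi 0),
      c ≤ (upSqrt (φ t)).im / Real.sqrt t := by
  refine ⟨1 / 2, by norm_num, ?_⟩
  filter_upwards [(h.tendsto_setIntegral_sq hT).eventually_le_const
      (show (0 : ℝ) < 1 / 64 by norm_num), Ioc_mem_nhdsGT hT] with t hE ht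
  have hre : t / 2 ≤ -(φ t).re := by
    have := (Complex.re_le_norm (φ t + t)).trans (hφ.norm_add_le ht hE)
    simp only [Complex.add_re, Complex.ofReal_re] at this
    linarith
  have hsqrt : 1 / 2 * √t ≤ √(t / 2) := by
    rw [Real.le_sqrt (by positivity) (by linarith [ht.1]), mul_pow, Real.sq_sqrt ht.1.le]
    linarith [ht.1]
  rw [le_div_iff₀ (Real.sqrt_pos.2 ht.1)]
  calc 1 / 2 * √t ≤ √(t / 2) := hsqrt
    _ ≤ √(-(φ t).re) := Real.sqrt_le_sqrt hre
    _ ≤ (upSqrt (φ t)).im := sqrt_neg_re_le_im_upSqrt _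
end

section
/- Let T > 0 and φ ∈ C₀([0,T],ℂ). Assume that sup over f ∈ C¹([0,T],ℝ) of J_{f,0}(φ) is finite and sup over g ∈ C¹([0,T],ℝ) of J_{0,g}(φ) is finite. Then Re φ and Im φ are absolutely continuous, and there exist measurable functions k, l: [0,T] → ℝ such that ∫₀^T k(r)²(|φ(r)| + Re φ(r)) dr + ∫₀^T l(r)²(|φ(r)| − Re φ(r)) dr < ∞, and for Lebesgue-almost every t: Re φ'(t) + 1 = (1/2) k(t)(|φ(t)| + Re φ(t)) and Im φ'(t) = (1/2) l(t)(|φ(t)| − Re φ(t)). -/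
open MeasureTheory Set Filter

/-! With `a = Re φ + t`, `w = |φ| + Re φ` (resp. `a = Im φ`, `w = |φ| - Re φ`) one has
`J_{f,0}(φ) = ½ ∫ f da - ¼ ∫ f² w`. Replacing `f` by `c f` scales the two terms by `c` and `c²`,
so an upper bound on `J` gives `(∫ f da)² ≤ M ∫ f² w`: `f ↦ ∫ f da` is bounded for the norm of
`L²(w dt)`, and the Riesz representation theorem yields `h ∈ L²(w dt)` with `∫ f da = ∫ f h w`.
Integration by parts against the primitive of `h w` shows that `a - ∫₀^· h w` is orthogonal
to every continuous function, hence vanishes; then `k = 2h`. -/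

section RSint

variable {T : ℝ} {f g a : ℝ → ℝ}

lemma RSint_const (c : ℝ) : RSint T (fun _ => c) a = c * a T := by
  simp [RSint]

lemma RSint_smul (c : ℝ) : RSint T (c • f) a = c * RSint T f a := by
  simp only [RSint, deriv_const_smul_field c, Pi.smul_apply, smul_eq_mul, mul_left_comm (a _),
    integral_const_mul]
  ring

lemma RSint_add (ha : ContinuousOn a (Icc 0 T)) (hf : ContDiff ℝ 1 f) (hg : ContDiff ℝ 1 g) :
    RSint T (f + g) a = RSint T f a + RSint T g a := by
  have hint : ∀ {u : ℝ → ℝ}, ContDiff ℝ 1 u → IntegrableOn (fun r => a r * deriv u r) (Ioc 0 T) :=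
    fun hu => (ha.mul (hu.continuous_deriv le_rfl).continuousOn).integrableOn_Icc.mono_set
      Ioc_subset_Icc_self
  simp only [RSint, deriv_add (hf.differentiable one_ne_zero _) (hg.differentiable one_ne_zero _),
    mul_add, integral_add (hint hf) (hint hg), Pi.add_apply]
  ring

def contDiffSubmodule (n : WithTop ℕ∞) : Submodule ℝ (ℝ → ℝ) where
  carrier := {f | ContDiff ℝ n f}
  add_mem' := ContDiff.add
  zero_mem' := contDiff_const
  smul_mem' c _ hf := hf.const_smul c

lemma mem_contDiffSubmodule {n : WithTop ℕ∞} {f : ℝ → ℝ} :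
    f ∈ contDiffSubmodule n ↔ ContDiff ℝ n f := Iff.rfl

noncomputable def RSint.linearMap (T : ℝ) (ha : ContinuousOn a (Icc 0 T)) :
    contDiffSubmodule 1 →ₗ[ℝ] ℝ where
  toFun f := RSint T f a
  map_add' f g := RSint_add ha f.2 g.2
  map_smul' c _ := RSint_smul c

end RSint

theorem exists_inner_eq_of_sq_le_mul_norm_sq {V E : Type*} [AddCommGroup V] [Module ℝ V]
    [NormedAddCommGroup E] [InnerProductSpace ℝ E] [CompleteSpace E]
    (A : V →ₗ[ℝ] E) (L : V →ₗ[ℝ] ℝ) (M : ℝ) (hL : ∀ v, L v ^ 2 ≤ M * ‖A v‖ ^ 2) :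
    ∃ y : E, ∀ v, L v = inner ℝ y (A v) := by
  have hbound : ∀ v, ‖L v‖ ≤ √M * ‖A v‖ := fun v => by
    rw [Real.norm_eq_abs, ← Real.sqrt_sq_eq_abs, ← Real.sqrt_sq (norm_nonneg (A v)),
      ← Real.sqrt_mul' _ (sq_nonneg _)]
    exact Real.sqrt_le_sqrt (hL v)
  have hker : LinearMap.ker A ≤ LinearMap.ker L := fun v hv => by
    simpa [LinearMap.mem_ker.1 hv] using hbound v
  let ℓ : LinearMap.range A →ₗ[ℝ] ℝ :=
    (LinearMap.ker A).liftQ L hker ∘ₗ A.quotKerEquivRange.symm.toLinearMap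
  have hℓ : ∀ v, ℓ ⟨A v, LinearMap.mem_range_self A v⟩ = L v := fun v => by
    simp [ℓ, LinearMap.quotKerEquivRange_symm_apply_image]
  obtain ⟨G, hG, -⟩ := exists_extension_norm_eq _
    (ℓ.mkContinuous √M (by rintro ⟨_, v, rfl⟩; simpa [hℓ] using hbound v))
  refine ⟨(InnerProductSpace.toDual ℝ E).symm G, fun v => ?_⟩
  rw [InnerProductSpace.toDual_symm_apply, ← hℓ v]
  exact (hG _).symm

section WithDensity

variable {α : Type*} [MeasurableSpace α] {ν : Measure α} {w : α → ℝ}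

lemma integral_withDensity_ofReal (hw : AEMeasurable w ν) (hw0 : ∀ᵐ x ∂ν, 0 ≤ w x)
    (g : α → ℝ) :
    ∫ x, g x ∂ν.withDensity (fun x => ENNReal.ofReal (w x)) = ∫ x, w x * g x ∂ν := by
  rw [integral_withDensity_eq_integral_toReal_smul₀ hw.ennreal_ofReal
    (ae_of_all _ fun _ => ENNReal.ofReal_lt_top)]
  refine integral_congr_ae ?_
  filter_upwards [hw0] with x hx
  simp [ENNReal.toReal_ofReal hx]

lemma integrable_withDensity_ofReal_iff (hw : AEMeasurable w ν) (hw0 : ∀ᵐ x ∂ν, 0 ≤ w x)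
    {g : α → ℝ} :
    Integrable g (ν.withDensity fun x => ENNReal.ofReal (w x)) ↔
      Integrable (fun x => w x * g x) ν := by
  rw [integrable_withDensity_iff_integrable_smul₀' hw.ennreal_ofReal
    (ae_of_all _ fun _ => ENNReal.ofReal_lt_top)]
  refine integrable_congr ?_
  filter_upwards [hw0] with x hx
  simp [ENNReal.toReal_ofReal hx]

end WithDensity

noncomputable abbrev weightedMeasure (T : ℝ) (w : ℝ → ℝ) : Measure ℝ :=
  (volume.restrict (Ioc 0 T)).withDensity fun r => ENNReal.ofReal (w r)

section Weighted

variable {T : ℝ} {w : ℝ → ℝ}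

lemma integral_weightedMeasure (hw : ContinuousOn w (Icc 0 T)) (hw0 : ∀ r ∈ Icc 0 T, 0 ≤ w r)
    (g : ℝ → ℝ) : ∫ r, g r ∂weightedMeasure T w = ∫ r in Ioc 0 T, w r * g r :=
  integral_withDensity_ofReal ((hw.mono Ioc_subset_Icc_self).aemeasurable measurableSet_Ioc)
    (ae_restrict_of_forall_mem measurableSet_Ioc fun r hr => hw0 r (Ioc_subset_Icc_self hr)) g

lemma integrable_weightedMeasure_iff (hw : ContinuousOn w (Icc 0 T))
    (hw0 : ∀ r ∈ Icc 0 T, 0 ≤ w r) {g : ℝ → ℝ} :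
    Integrable g (weightedMeasure T w) ↔ IntegrableOn (fun r => w r * g r) (Ioc 0 T) :=
  integrable_withDensity_ofReal_iff
    ((hw.mono Ioc_subset_Icc_self).aemeasurable measurableSet_Ioc)
    (ae_restrict_of_forall_mem measurableSet_Ioc fun r hr => hw0 r (Ioc_subset_Icc_self hr))

lemma isFiniteMeasure_weightedMeasure (hw : ContinuousOn w (Icc 0 T)) :
    IsFiniteMeasure (weightedMeasure T w) :=
  isFiniteMeasure_withDensity_ofReal (hw.integrableOn_Icc.mono_set Ioc_subset_Icc_self).2

lemma memLp_two_weightedMeasure (hw : ContinuousOn w (Icc 0 T))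
    (hw0 : ∀ r ∈ Icc 0 T, 0 ≤ w r) {f : ℝ → ℝ} (hf : Continuous f) :
    MemLp f 2 (weightedMeasure T w) :=
  (memLp_two_iff_integrable_sq hf.aestronglyMeasurable).2 <|
    (integrable_weightedMeasure_iff hw hw0).2 <|
      (hw.mul (hf.pow 2).continuousOn).integrableOn_Icc.mono_set Ioc_subset_Icc_self

end Weighted

theorem exists_RSint_eq_integral_weight_mul {T : ℝ} {a w : ℝ → ℝ}
    (ha : ContinuousOn a (Icc 0 T)) (hw : ContinuousOn w (Icc 0 T))
    (hw0 : ∀ r ∈ Icc 0 T, 0 ≤ w r) {M : ℝ}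
    (hM : ∀ f, ContDiff ℝ 1 f → RSint T f a ^ 2 ≤ M * ∫ r in Ioc 0 T, f r ^ 2 * w r) :
    ∃ h : ℝ → ℝ, Measurable h ∧ IntegrableOn (fun r => h r * w r) (Ioc 0 T) ∧
      IntegrableOn (fun r => h r ^ 2 * w r) (Ioc 0 T) ∧
      ∀ f, ContDiff ℝ 1 f → RSint T f a = ∫ r in Ioc 0 T, f r * (h r * w r) := by
  set μ := weightedMeasure T w
  have := isFiniteMeasure_weightedMeasure hw
  have hmem : ∀ f : contDiffSubmodule 1, MemLp f 2 μ := fun f =>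
    memLp_two_weightedMeasure hw hw0 (mem_contDiffSubmodule.1 f.2).continuous
  let A : contDiffSubmodule 1 →ₗ[ℝ] Lp ℝ 2 μ :=
    { toFun f := (hmem f).toLp
      map_add' f g := MemLp.toLp_add (hmem f) (hmem g)
      map_smul' c f := MemLp.toLp_const_smul c (hmem f) }
  have hA : ∀ (u : Lp ℝ 2 μ) f, inner ℝ u (A f) = ∫ r, u r * (f : ℝ → ℝ) r ∂μ := fun u f => by
    rw [L2.inner_def]
    refine integral_congr_ae ?_
    filter_upwards [(hmem f).coeFn_toLp] with r hr
    simp [A, hr, mul_comm]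
  have hnorm : ∀ f, ‖A f‖ ^ 2 = ∫ r in Ioc 0 T, (f : ℝ → ℝ) r ^ 2 * w r := fun f => calc
    _ = ∫ r, (f : ℝ → ℝ) r * (f : ℝ → ℝ) r ∂μ := by
      rw [← real_inner_self_eq_norm_sq, hA]
      refine integral_congr_ae ?_
      filter_upwards [(hmem f).coeFn_toLp] with r hr
      simp [A, hr]
    _ = _ := by
      rw [integral_weightedMeasure hw hw0]
      congr 1 with r
      ring
  obtain ⟨y, hy⟩ := exists_inner_eq_of_sq_le_mul_norm_sq A (RSint.linearMap T ha) M
    fun f => (hnorm f).symm ▸ hM f f.2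
  set h := (Lp.aestronglyMeasurable y).mk y
  have hyh : y =ᵐ[μ] h := (Lp.aestronglyMeasurable y).ae_eq_mk
  have hh : MemLp h 2 μ := (Lp.memLp y).ae_eq hyh
  refine ⟨h, (Lp.aestronglyMeasurable y).stronglyMeasurable_mk.measurable,
    ((integrable_weightedMeasure_iff hw hw0).1 (hh.integrable one_le_two)).congr_fun
      (fun r _ => mul_comm _ _) measurableSet_Ioc,
    ((integrable_weightedMeasure_iff hw hw0).1 hh.integrable_sq).congr_fun
      (fun r _ => mul_comm _ _) measurableSet_Ioc, fun f hf => ?_⟩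
  calc RSint T f a = ∫ r, y r * f r ∂μ := (hy ⟨f, hf⟩).trans (hA y ⟨f, hf⟩)
    _ = ∫ r, h r * f r ∂μ := integral_congr_ae (by filter_upwards [hyh] with r hr; rw [hr])
    _ = ∫ r in Ioc 0 T, f r * (h r * w r) := by
      rw [integral_weightedMeasure hw hw0]
      congr 1 with r
      ring

section Identification

variable {T : ℝ} {a b ρ : ℝ → ℝ}

lemma RSint_primitive (hT : 0 ≤ T) (hρ : IntegrableOn ρ (Ioc 0 T)) {f : ℝ → ℝ}
    (hf : ContDiff ℝ 1 f) :
    RSint T f (fun t => ∫ s in Ioc 0 t, ρ s) = ∫ r in Ioc 0 T, f r * ρ r := by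
  set K : ℝ → ℝ := fun t => ∫ s in (0)..t, ρ s
  have hρi : IntervalIntegrable ρ volume 0 T :=
    (intervalIntegrable_iff_integrableOn_Ioc_of_le hT).2 hρ
  have hK : EqOn (fun t => ∫ s in Ioc 0 t, ρ s) K (Icc 0 T) := fun t ht =>
    (intervalIntegral.integral_of_le ht.1).symm
  have hK' : ∫ r in (0)..T, deriv K r * f r = ∫ r in (0)..T, ρ r * f r := by
    refine intervalIntegral.integral_congr_ae ?_
    filter_upwards [hρi.ae_hasDerivAt_integral] with r hr hr'
    rw [(hr (uIoc_subset_uIcc hr') 0 left_mem_uIcc).deriv]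
  have ibp := (hρi.absolutelyContinuousOnInterval_intervalIntegral
    left_mem_uIcc).integral_mul_deriv_eq_deriv_mul hf.contDiffOn.absolutelyContinuousOnInterval
  rw [hK', intervalIntegral.integral_of_le hT, intervalIntegral.integral_of_le hT] at ibp
  rw [RSint, setIntegral_congr_fun measurableSet_Ioc fun r hr =>
    congrArg (· * deriv f r) (hK (Ioc_subset_Icc_self hr)), ibp, intervalIntegral.integral_same,
    intervalIntegral.integral_of_le hT]
  simp only [mul_comm (ρ _)]
  ring

lemma contDiff_one_primitive {ψ : ℝ → ℝ} (hψ : Continuous ψ) :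
    ContDiff ℝ 1 (fun x => ∫ t in (0)..x, ψ t) :=
  contDiff_one_iff_deriv.2 ⟨fun x => (hψ.integral_hasStrictDerivAt 0 x).hasDerivAt.differentiableAt,
    by simpa only [funext (hψ.deriv_integral ψ 0)] using hψ⟩

lemma integral_mul_eq_of_forall_RSint_eq (h : ∀ f, ContDiff ℝ 1 f → RSint T f a = RSint T f b)
    {ψ : ℝ → ℝ} (hψ : Continuous ψ) :
    ∫ r in Ioc 0 T, a r * ψ r = ∫ r in Ioc 0 T, b r * ψ r := by
  have hend : a T = b T := by simpa [RSint_const] using h _ (contDiff_const (c := (1 : ℝ)))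
  have := h _ (contDiff_one_primitive hψ)
  simp only [RSint, funext (hψ.deriv_integral ψ 0), hend] at this
  linarith

lemma eqOn_of_forall_RSint_eq (hT : 0 < T) (ha : ContinuousOn a (Icc 0 T))
    (hb : ContinuousOn b (Icc 0 T)) (h : ∀ f, ContDiff ℝ 1 f → RSint T f a = RSint T f b) :
    EqOn a b (Icc 0 T) := by
  have hd : ContinuousOn (fun r => a r - b r) (Icc 0 T) := ha.sub hb
  set ψ := IccExtend hT.le fun r : Icc 0 T => a r - b r
  have hψ : EqOn ψ (fun r => a r - b r) (Icc 0 T) := fun r hr => IccExtend_of_mem hT.le _ hr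
  have hψc : Continuous ψ :=
    (continuousOn_iff_continuous_domRestrict.1 hd).Icc_extend' (h := hT.le)
  have hint : ∀ {c}, ContinuousOn c (Icc 0 T) → IntegrableOn (fun r => c r * ψ r) (Ioc 0 T) :=
    fun hc => (hc.mul hψc.continuousOn).integrableOn_Icc.mono_set Ioc_subset_Icc_self
  have hsq : ∫ r in Ioc 0 T, (a r - b r) ^ 2 = 0 := calc
    _ = ∫ r in Ioc 0 T, (a r * ψ r - b r * ψ r) :=
      setIntegral_congr_fun measurableSet_Ioc fun r hr => by
        simp only [hψ (Ioc_subset_Icc_self hr), sq, sub_mul]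
    _ = 0 := by
      rw [integral_sub (hint ha) (hint hb), integral_mul_eq_of_forall_RSint_eq h hψc, sub_self]
  have hae : (fun r => (a r - b r) ^ 2) =ᵐ[volume.restrict (Ioc 0 T)] 0 :=
    (integral_eq_zero_iff_of_nonneg (fun _ => sq_nonneg _)
      ((hd.pow 2).integrableOn_Icc.mono_set Ioc_subset_Icc_self)).1 hsq
  refine Measure.eqOn_Icc_of_ae_eq volume hT.ne ?_ ha hb
  rw [Measure.restrict_congr_set Ioc_ae_eq_Icc.symm]
  filter_upwards [hae] with r hr
  simpa [sub_eq_zero] using hr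

theorem eq_integral_of_RSint_eq_integral (hT : 0 < T) (ha : ContinuousOn a (Icc 0 T))
    (hρ : IntegrableOn ρ (Ioc 0 T))
    (h : ∀ f, ContDiff ℝ 1 f → RSint T f a = ∫ r in Ioc 0 T, f r * ρ r) :
    ∀ t ∈ Icc 0 T, a t = ∫ s in Ioc 0 t, ρ s :=
  eqOn_of_forall_RSint_eq hT ha
    (intervalIntegral.continuousOn_primitive
      ((integrableOn_Icc_iff_integrableOn_Ioc (f := ρ)).2 hρ))
    fun f hf => (h f hf).trans (RSint_primitive hT.le hρ hf).symm

end Identification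

lemma sq_le_of_forall_mul_sub_sq_le {R Q M : ℝ} (hQ : 0 ≤ Q)
    (h : ∀ c : ℝ, c * R / 2 - c ^ 2 * Q / 4 ≤ M) : R ^ 2 ≤ 4 * M * Q := by
  rcases hQ.eq_or_lt with rfl | hQ
  · simp only [mul_zero, zero_div, sub_zero] at h ⊢
    by_contra hR
    have hR : R ≠ 0 := by rintro rfl; simp at hR
    have := h (2 * (M + 1) / R)
    field_simp at this
    linarith
  · have := h (R / Q)
    field_simp at this
    nlinarith

section Density

variable {T : ℝ} {a w : ℝ → ℝ}

lemma sq_RSint_le_of_forall_le (hw0 : ∀ r ∈ Icc 0 T, 0 ≤ w r) {C : ℝ}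
    (hC : ∀ f, ContDiff ℝ 1 f → 1 / 2 * RSint T f a - 1 / 4 * ∫ r in Ioc 0 T, f r ^ 2 * w r ≤ C)
    {f : ℝ → ℝ} (hf : ContDiff ℝ 1 f) :
    RSint T f a ^ 2 ≤ 4 * C * ∫ r in Ioc 0 T, f r ^ 2 * w r := by
  refine sq_le_of_forall_mul_sub_sq_le (setIntegral_nonneg measurableSet_Ioc fun r hr =>
    mul_nonneg (sq_nonneg _) (hw0 r (Ioc_subset_Icc_self hr))) fun c => ?_
  have := hC (c • f) (hf.const_smul c)
  simp only [RSint_smul, Pi.smul_apply, smul_eq_mul, mul_pow, mul_assoc, integral_const_mul] at this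
  linarith

theorem exists_density_of_bddAbove (hT : 0 < T) (ha : ContinuousOn a (Icc 0 T))
    (hw : ContinuousOn w (Icc 0 T)) (hw0 : ∀ r ∈ Icc 0 T, 0 ≤ w r)
    (hbdd : BddAbove {x | ∃ f : ℝ → ℝ, ContDiff ℝ 1 f ∧
      x = 1 / 2 * RSint T f a - 1 / 4 * ∫ r in Ioc 0 T, f r ^ 2 * w r}) :
    ∃ k : ℝ → ℝ, Measurable k ∧ ∫⁻ r in Ioc 0 T, ENNReal.ofReal (k r ^ 2 * w r) < ⊤ ∧
      ∀ t ∈ Icc 0 T, a t = ∫ s in Ioc 0 t, 1 / 2 * k s * w s := by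
  obtain ⟨C, hC⟩ := hbdd
  obtain ⟨h, hm, hρ, hsq, hrep⟩ := exists_RSint_eq_integral_weight_mul ha hw hw0
    fun f hf => sq_RSint_le_of_forall_le hw0 (fun f hf => hC ⟨f, hf, rfl⟩) hf
  refine ⟨fun r => 2 * h r, measurable_const.mul hm, ?_, fun t ht => ?_⟩
  · have h4 : ∀ r, (2 * h r) ^ 2 * w r = 4 * (h r ^ 2 * w r) := fun r => by ring
    simpa only [h4] using (hsq.const_mul 4).lintegral_lt_top
  · rw [eq_integral_of_RSint_eq_integral hT ha hρ hrep t ht]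
    congr 1 with s
    ring

end Density

lemma Jfun_zero_right (T : ℝ) (f : ℝ → ℝ) (ξ : ℝ → ℂ) :
    Jfun T f (fun _ => 0) ξ = 1 / 2 * RSint T f (fun r => (ξ r).re + r) -
      1 / 4 * ∫ r in Ioc 0 T, f r ^ 2 * (‖ξ r‖ + (ξ r).re) := by
  simp only [Jfun, RSint_const, zero_mul, add_zero, ne_eq, OfNat.ofNat_ne_zero,
    not_false_eq_true, zero_pow, zero_div, mul_zero, integral_div]
  ring

lemma Jfun_zero_left (T : ℝ) (g : ℝ → ℝ) (ξ : ℝ → ℂ) :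
    Jfun T (fun _ => 0) g ξ = 1 / 2 * RSint T g (fun r => (ξ r).im) -
      1 / 4 * ∫ r in Ioc 0 T, g r ^ 2 * (‖ξ r‖ - (ξ r).re) := by
  simp only [Jfun, RSint_const, zero_mul, zero_add, ne_eq, OfNat.ofNat_ne_zero,
    not_false_eq_true, zero_pow, zero_div, add_zero, integral_div]
  ring

theorem stmt13_general (T : ℝ) (hT : 0 < T) (φ : ℝ → ℂ)
    (hφc : ContinuousOn φ (Set.Icc 0 T))
    (hbddf : BddAbove {x : ℝ | ∃ f : ℝ → ℝ, ContDiff ℝ 1 f ∧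
      x = Jfun T f (fun _ => 0) φ})
    (hbddg : BddAbove {x : ℝ | ∃ g : ℝ → ℝ, ContDiff ℝ 1 g ∧
      x = Jfun T (fun _ => 0) g φ}) :
    ∃ k l : ℝ → ℝ, Measurable k ∧ Measurable l ∧
      (∫⁻ r in Set.Ioc 0 T,
          ENNReal.ofReal ((k r) ^ 2 * (‖φ r‖ + (φ r).re))) +
        (∫⁻ r in Set.Ioc 0 T,
          ENNReal.ofReal ((l r) ^ 2 * (‖φ r‖ - (φ r).re))) < ⊤ ∧
      (∀ t ∈ Set.Icc 0 T, (φ t).re =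
        -t + ∫ s in Set.Ioc 0 t, (1 / 2) * k s * (‖φ s‖ + (φ s).re)) ∧
      (∀ t ∈ Set.Icc 0 T, (φ t).im =
        ∫ s in Set.Ioc 0 t, (1 / 2) * l s * (‖φ s‖ - (φ s).re)) := by
  have hre : ContinuousOn (fun r => (φ r).re) (Icc 0 T) :=
    Complex.continuous_re.comp_continuousOn hφc
  have hnorm : ContinuousOn (fun r => ‖φ r‖) (Icc 0 T) := continuous_norm.comp_continuousOn hφc
  simp only [Jfun_zero_right] at hbddf
  simp only [Jfun_zero_left] at hbddg
  obtain ⟨k, hk, hk_fin, hk_eq⟩ := exists_density_of_bddAbove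
    (a := fun r => (φ r).re + r) (w := fun r => ‖φ r‖ + (φ r).re) hT (hre.add continuousOn_id)
    (hnorm.add hre)
    (fun r _ => neg_le_iff_add_nonneg'.1 (abs_le.1 (Complex.abs_re_le_norm (φ r))).1) hbddf
  obtain ⟨l, hl, hl_fin, hl_eq⟩ := exists_density_of_bddAbove
    (a := fun r => (φ r).im) (w := fun r => ‖φ r‖ - (φ r).re) hT
    (Complex.continuous_im.comp_continuousOn hφc) (hnorm.sub hre)
    (fun r _ => sub_nonneg.2 (Complex.re_le_norm (φ r))) hbddg
  refine ⟨k, l, hk, hl, ENNReal.add_lt_top.2 ⟨hk_fin, hl_fin⟩, fun t ht => ?_, hl_eq⟩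
  linarith [hk_eq t ht]

/-- If `sup_f J_{f,0}(φ) < ∞` and `sup_g J_{0,g}(φ) < ∞`, then `Re φ`,
`Im φ` are absolutely continuous with a.e. derivatives
`Re φ' + 1 = ½ k (|φ| + Re φ)` and `Im φ' = ½ l (|φ| − Re φ)` for measurable `k, l`
with `∫₀ᵀ k²(|φ|+Re φ) + ∫₀ᵀ l²(|φ|−Re φ) < ∞`; the absolute continuity and the a.e.
derivative identities are recorded as integral representations. -/
theorem stmt13 (T : ℝ) (hT : 0 < T) (φ : ℝ → ℂ)
    (hφc : ContinuousOn φ (Set.Icc 0 T)) (hφ0 : φ 0 = 0)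
    (hbddf : BddAbove {x : ℝ | ∃ f : ℝ → ℝ, ContDiff ℝ 1 f ∧
      x = Jfun T f (fun _ => 0) φ})
    (hbddg : BddAbove {x : ℝ | ∃ g : ℝ → ℝ, ContDiff ℝ 1 g ∧
      x = Jfun T (fun _ => 0) g φ}) :
    ∃ k l : ℝ → ℝ, Measurable k ∧ Measurable l ∧
      (∫⁻ r in Set.Ioc 0 T,
          ENNReal.ofReal ((k r) ^ 2 * (‖φ r‖ + (φ r).re))) +
        (∫⁻ r in Set.Ioc 0 T,
          ENNReal.ofReal ((l r) ^ 2 * (‖φ r‖ - (φ r).re))) < ⊤ ∧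
      (∀ t ∈ Set.Icc 0 T, (φ t).re =
        -t + ∫ s in Set.Ioc 0 t, (1 / 2) * k s * (‖φ s‖ + (φ s).re)) ∧
      (∀ t ∈ Set.Icc 0 T, (φ t).im =
        ∫ s in Set.Ioc 0 t, (1 / 2) * l s * (‖φ s‖ - (φ s).re)) :=
  stmt13_general T hT φ hφc hbddf hbddg
end
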